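/- Let α > 0, α_r > 0 and σ ∈ ℝ. Let A be the 2 × 2 real matrix with rows (−α − α_r, α_r) and (α_r, −α − α_r), and let G be the 2 × 2 real matrix with rows (0, 0) and (0, σ). Then for every t ≥ 0, the (1,1) entry of ∫₀^{t} exp((t − u)A) · G · Gᵀ · exp((t − u)Aᵀ) du equals (σ²/4) · [ (1 − e^{−2α t})/(2α) − (1 − e^{−2(α + α_r) t})/(α + α_r) + (1 − e^{−2(α + 2α_r) t})/(2(α + 2α_r)) ]. -/

import Mathlib

/-!
The drift matrix is symmetric with eigenvectors `(1, ±1)` and eigenvalues `-α`, `-(α + 2α_r)`, so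
`exp (s A)` has off-diagonal entry `(e^{-αs} - e^{-(α+2α_r)s}) / 2`. Since `G Gᵀ` is `σ²` in the
lower-right corner only and `exp (s Aᵀ) = (exp (s A))ᵀ`, the integrand is `σ²` times the square of
that entry: a combination of the three exponentials `e^{-2αs}`, `e^{-2(α+α_r)s}`,
`e^{-2(α+2α_r)s}`, each integrated in closed form.
-/

open Matrix MeasureTheory intervalIntegral NormedSpace

namespace Matrix

lemma conj_diagonal_fin_two {K : Type*} [Field K] [NeZero (2 : K)] (x y : K) :
    !![1, 1; 1, -1] * diagonal ![x, y] * !![1, 1; 1, -1]⁻¹ =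
      !![(x + y) / 2, (x - y) / 2; (x - y) / 2, (x + y) / 2] := by
  have hinv : (!![1, 1; 1, -1] : Matrix (Fin 2) (Fin 2) K)⁻¹ = !![1 / 2, 1 / 2; 1 / 2, -1 / 2] := by
    refine inv_eq_right_inv ?_
    ext i j; fin_cases i <;> fin_cases j <;> simp [mul_apply, Fin.sum_univ_two] <;> field_simp <;> ring
  rw [hinv]
  ext i j; fin_cases i <;> fin_cases j <;> simp [mul_apply, Fin.sum_univ_two, vecMul_diagonal] <;> ring

lemma exp_fin_two_symm (a b : ℝ) :
    exp !![a, b; b, a] =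
      !![(Real.exp (a + b) + Real.exp (a - b)) / 2, (Real.exp (a + b) - Real.exp (a - b)) / 2;
        (Real.exp (a + b) - Real.exp (a - b)) / 2, (Real.exp (a + b) + Real.exp (a - b)) / 2] := by
  have hunit : IsUnit (!![1, 1; 1, -1] : Matrix (Fin 2) (Fin 2) ℝ) := by
    rw [isUnit_iff_isUnit_det, det_fin_two_of]; norm_num
  have hdiag : !![a, b; b, a] = !![1, 1; 1, -1] * diagonal ![a + b, a - b] * !![1, 1; 1, -1]⁻¹ := by
    rw [conj_diagonal_fin_two]; congr <;> ring
  have hexp : exp ![a + b, a - b] = ![Real.exp (a + b), Real.exp (a - b)] := by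
    ext i; fin_cases i <;> simp [Real.exp_eq_exp_ℝ]
  rw [hdiag, exp_conj _ _ hunit, exp_diagonal, hexp, conj_diagonal_fin_two]

lemma exp_smul_two_compartment_apply_zero_one (α αr s : ℝ) :
    exp (s • !![-α - αr, αr; αr, -α - αr]) 0 1 =
      (Real.exp (-α * s) - Real.exp (-(α + 2 * αr) * s)) / 2 := by
  have hsA : s • !![-α - αr, αr; αr, -α - αr] =
      !![(-α - αr) * s, αr * s; αr * s, (-α - αr) * s] := by
    ext i j; fin_cases i <;> fin_cases j <;> simp [mul_comm]
  rw [hsA, exp_fin_two_symm]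
  simp only [of_apply, cons_val', cons_val_zero, cons_val_one, empty_val', cons_val_fin_one]
  ring_nf

lemma mul_corner_mul_transpose_apply_zero_zero (M : Matrix (Fin 2) (Fin 2) ℝ) (σ : ℝ) :
    (M * !![0, 0; 0, σ] * (!![0, 0; 0, σ])ᵀ * Mᵀ) 0 0 = (σ * M 0 1) ^ 2 := by
  simp only [mul_apply, of_apply, cons_val', cons_val_fin_one, Fin.sum_univ_two, cons_val_zero,
    cons_val_one, transpose_apply, mul_zero, add_zero, zero_mul, zero_add]
  ring

end Matrix

lemma integral_exp_neg_mul_sub {c : ℝ} (hc : c ≠ 0) (t : ℝ) :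
    ∫ u in (0:ℝ)..t, Real.exp (-c * (t - u)) = (1 - Real.exp (-c * t)) / c := by
  rw [integral_comp_sub_left (fun v => Real.exp (-c * v)),
    integral_comp_mul_left _ (neg_ne_zero.2 hc)]
  simp only [inv_neg, sub_self, mul_zero, sub_zero, neg_mul, integral_exp, Real.exp_zero,
    smul_eq_mul]
  ring

lemma integral_sq_exp_sub_exp {a b : ℝ} (ha : a ≠ 0) (hb : b ≠ 0) (hab : a + b ≠ 0) (t : ℝ) :
    ∫ u in (0:ℝ)..t, (Real.exp (-a * (t - u)) - Real.exp (-b * (t - u))) ^ 2 =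
      (1 - Real.exp (-(2 * a) * t)) / (2 * a) - 2 * ((1 - Real.exp (-(a + b) * t)) / (a + b)) +
        (1 - Real.exp (-(2 * b) * t)) / (2 * b) := by
  have hsq (u : ℝ) : (Real.exp (-a * (t - u)) - Real.exp (-b * (t - u))) ^ 2 =
      Real.exp (-(2 * a) * (t - u)) - 2 * Real.exp (-(a + b) * (t - u)) +
        Real.exp (-(2 * b) * (t - u)) := by
    rw [sub_sq, sq, sq, mul_assoc, ← Real.exp_add, ← Real.exp_add, ← Real.exp_add]
    ring_nf
  have hint (c : ℝ) : IntervalIntegrable (fun u => Real.exp (-c * (t - u))) volume 0 t := by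
    apply Continuous.intervalIntegrable; fun_prop
  simp_rw [hsq]
  rw [integral_add ((hint _).sub ((hint _).const_mul 2)) (hint _),
    integral_sub (hint _) ((hint _).const_mul 2), intervalIntegral.integral_const_mul,
    integral_exp_neg_mul_sub (mul_ne_zero two_ne_zero ha), integral_exp_neg_mul_sub hab,
    integral_exp_neg_mul_sub (mul_ne_zero two_ne_zero hb)]

theorem two_compartment_variance_general
    (α αr σ : ℝ) (hα : 0 < α) (hαr : 0 < αr)
    (A G : Matrix (Fin 2) (Fin 2) ℝ)
    (hA : A = !![-α - αr, αr; αr, -α - αr]) (hG : G = !![0, 0; 0, σ])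
    (t : ℝ) :
    (∫ u in (0:ℝ)..t, (exp ((t - u) • A) * G * Gᵀ * exp ((t - u) • Aᵀ)) 0 0) =
      σ ^ 2 / 4 *
        ((1 - Real.exp (-2 * α * t)) / (2 * α) -
          (1 - Real.exp (-2 * (α + αr) * t)) / (α + αr) +
          (1 - Real.exp (-2 * (α + 2 * αr) * t)) / (2 * (α + 2 * αr))) := by
  subst hA hG
  have hintegrand (u : ℝ) :
      (exp ((t - u) • !![-α - αr, αr; αr, -α - αr]) * !![0, 0; 0, σ] * (!![0, 0; 0, σ])ᵀ *
          exp ((t - u) • (!![-α - αr, αr; αr, -α - αr])ᵀ)) 0 0 =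
        σ ^ 2 / 4 * (Real.exp (-α * (t - u)) - Real.exp (-(α + 2 * αr) * (t - u))) ^ 2 := by
    rw [← transpose_smul, exp_transpose, mul_corner_mul_transpose_apply_zero_zero,
      exp_smul_two_compartment_apply_zero_one]
    ring
  simp_rw [hintegrand]
  rw [intervalIntegral.integral_const_mul,
    integral_sq_exp_sub_exp hα.ne' (by positivity) (by positivity)]
  field_simp
  ring_nf

/-- The variance `Q^{(11)}` of the trigger-zone component in the two-compartment
neuronal model: with drift matrix `A = [[-α-α_r, α_r],[α_r, -α-α_r]]`
(`α, α_r > 0`) and diffusion matrix `G = [[0,0],[0,σ]]`, for every `t ≥ 0` the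
`(1,1)` entry of `∫₀ᵗ exp((t-u)A) G Gᵀ exp((t-u)Aᵀ) du` equals
`(σ²/4) [(1 - e^{-2αt})/(2α) - (1 - e^{-2(α+α_r)t})/(α+α_r)
          + (1 - e^{-2(α+2α_r)t})/(2(α+2α_r))]`. -/
theorem two_compartment_variance
    (α αr σ : ℝ) (hα : 0 < α) (hαr : 0 < αr)
    (A G : Matrix (Fin 2) (Fin 2) ℝ)
    (hA : A = !![-α - αr, αr; αr, -α - αr]) (hG : G = !![0, 0; 0, σ])
    (t : ℝ) (ht : 0 ≤ t) :
    (∫ u in (0:ℝ)..t, (exp ((t - u) • A) * G * Gᵀ * exp ((t - u) • Aᵀ)) 0 0) =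
      σ ^ 2 / 4 *
        ((1 - Real.exp (-2 * α * t)) / (2 * α) -
          (1 - Real.exp (-2 * (α + αr) * t)) / (α + αr) +
          (1 - Real.exp (-2 * (α + 2 * αr) * t)) / (2 * (α + 2 * αr))) :=
  two_compartment_variance_general α αr σ hα hαr A G hA hG t
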